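/- Let θ: [0,1] → ℝ be continuous and suppose that θ is simultaneously (φ,ε)-quasicritical of type σ and (φ,ε')-quasicritical of type σ', for some φ ∈ ℝ, some ε, ε' ∈ (0, π/4), and some sign strings σ and σ'. Then σ' ≠ −σ. -/
import Mathlib


open Real

/-- A sign string of length `m` (values `±1`, alternating), 0-indexed. -/
def IsSignString (m : ℕ) (s : ℕ → ℝ) : Prop :=
  2 ≤ m ∧ (∀ j < m, s j = 1 ∨ s j = -1) ∧ ∀ j, j + 1 < m → s (j + 1) = - s j

/-- `θ` is `(φ,ε)`-quasicritical of type the sign string `(n, s)`: there are closed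
intervals `J_k = [a k, c k]` (`k < n`), `J₀ < … < J_{n-1}`, inside `[0,1]` such that
(i) `θ(J_k) ⊆ (φ₋+2ε, φ₊+ε)` if `s k = 1` and `θ(J_k) ⊆ (φ₋−ε, φ₊−2ε)` if `s k = −1`;
(ii) `|θ(t) − φ| < π/2 − 2ε` for `t ∈ [0,1]` outside the interior of `⋃ J_k`;
(iii) each `J_k` contains a closed subinterval on which `|θ − φ_{s k}| < ε`. -/
def Quasicritical (θ : ℝ → ℝ) (φ ε : ℝ) (n : ℕ) (s : ℕ → ℝ) : Prop :=
  ∃ a c : ℕ → ℝ,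
    (∀ k < n, 0 ≤ a k ∧ a k ≤ c k ∧ c k ≤ 1) ∧
    (∀ k, k + 1 < n → c k < a (k + 1)) ∧
    (∀ k < n, s k = 1 → ∀ t ∈ Set.Icc (a k) (c k),
        θ t ∈ Set.Ioo (φ - π / 2 + 2 * ε) (φ + π / 2 + ε)) ∧
    (∀ k < n, s k = -1 → ∀ t ∈ Set.Icc (a k) (c k),
        θ t ∈ Set.Ioo (φ - π / 2 - ε) (φ + π / 2 - 2 * ε)) ∧
    (∀ t ∈ Set.Icc (0 : ℝ) 1,
        t ∉ interior (⋃ k ∈ Finset.range n, Set.Icc (a k) (c k)) →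
        |θ t - φ| < π / 2 - 2 * ε) ∧
    (∀ k < n, ∃ p q : ℝ, a k ≤ p ∧ p ≤ q ∧ q ≤ c k ∧
        ∀ t ∈ Set.Icc p q, |θ t - (φ + s k * (π / 2))| < ε)

lemma quasikey (θ : ℝ → ℝ) (φ ε ε' : ℝ) (hε0 : 0 < ε) (hle : ε' ≤ ε)
    (n : ℕ) (hn : 0 < n) (s s' : ℕ → ℝ)
    (hsv : ∀ j < n, s j = 1 ∨ s j = -1)
    (hsa : ∀ j, j + 1 < n → s (j + 1) = - s j)
    (hss' : ∀ i < n, s' i = - s i)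
    (hq : Quasicritical θ φ ε n s) (hq' : Quasicritical θ φ ε' n s') : False := by
  obtain ⟨a, c, hac, hord, hpos, hneg, hout, -⟩ := hq
  obtain ⟨a', c', hac', hord', -, -, -, h6'⟩ := hq'
  choose! P Q hap hpq hqc hval using h6'
  have hs'v : ∀ j < n, s' j = 1 ∨ s' j = -1 := by
    intro j hj
    rcases hsv j hj with e | e
    · right; rw [hss' j hj, e]
    · left; rw [hss' j hj, e]; norm_num
  -- ordering of the J intervals
  have chain : ∀ m, ∀ j, j + 1 ≤ m → m < n → c j < a m := by
    intro m
    induction m with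
    | zero => omega
    | succ m ih =>
      intro j hjm hmn
      rcases Nat.lt_or_ge j m with h | h
      · have h1 := ih j h (by omega)
        have h2 := (hac m (by omega)).2.1
        have h3 := hord m hmn
        linarith
      · have : j = m := by omega
        subst this
        exact hord j hmn
  -- the witness points are increasing
  have pinc : ∀ k, k + 1 < n → P k < P (k + 1) := by
    intro k h
    have h1 := hpq k (by omega)
    have h2 := hqc k (by omega)
    have h3 := hord' k h
    have h4 := hap (k + 1) h
    linarith
  -- each witness point of the σ' structure lies in a σ interval of the same sign
  have mem : ∀ k < n, ∃ j, j < n ∧ a j ≤ P k ∧ P k ≤ c j ∧ s j = s' k := by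
    intro k hk
    have hv := hval k hk (P k) ⟨le_refl _, hpq k hk⟩
    have h01 : P k ∈ Set.Icc (0 : ℝ) 1 := by
      have := hac' k hk
      have := hpq k hk
      have := hqc k hk
      have := hap k hk
      constructor <;> linarith [this]
    have habs : ¬ |θ (P k) - φ| < π / 2 - 2 * ε := by
      rcases hs'v k hk with e | e <;> rw [e] at hv <;>
        rw [abs_lt] at hv <;> intro hcon <;> rw [abs_lt] at hcon <;>
        [linarith [hv.1, hcon.2]; linarith [hv.2, hcon.1]]
    have hint : P k ∈ interior (⋃ j ∈ Finset.range n, Set.Icc (a j) (c j)) := by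
      by_contra hno
      exact habs (hout (P k) h01 hno)
    have hUn := interior_subset hint
    simp only [Set.mem_iUnion, Finset.mem_range, Set.mem_Icc, exists_prop] at hUn
    obtain ⟨j, hjn, hj1, hj2⟩ := hUn
    refine ⟨j, hjn, hj1, hj2, ?_⟩
    rcases hs'v k hk with ek | ek <;> rcases hsv j hjn with ej | ej <;>
      rw [ek, ej]
    · exfalso
      have h2 := (hneg j hjn ej (P k) ⟨hj1, hj2⟩).2
      rw [ek, abs_lt] at hv
      linarith [hv.1]
    · exfalso
      have h2 := (hpos j hjn ej (P k) ⟨hj1, hj2⟩).1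
      rw [ek, abs_lt] at hv
      linarith [hv.2]
  -- the main induction: the σ-interval containing P k has index > k
  have main : ∀ k, k < n → ∃ j, k < j ∧ j < n ∧ a j ≤ P k ∧ P k ≤ c j ∧ s j = s' k := by
    intro k
    induction k with
    | zero =>
      intro h0
      obtain ⟨j, hjn, h1, h2, h3⟩ := mem 0 h0
      refine ⟨j, ?_, hjn, h1, h2, h3⟩
      rcases Nat.eq_zero_or_pos j with rfl | h
      · exfalso
        have h4 : s 0 = - s 0 := h3.trans (hss' 0 h0)
        rcases hsv 0 h0 with e | e <;> rw [e] at h4 <;> norm_num at h4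
      · exact h
    | succ k ih =>
      intro hk1
      have hk : k < n := by omega
      obtain ⟨j₀, hkj₀, hj₀n, hA, hB, hS⟩ := ih hk
      obtain ⟨j, hjn, h1, h2, h3⟩ := mem (k + 1) hk1
      refine ⟨j, ?_, hjn, h1, h2, h3⟩
      have hpk : P k < P (k + 1) := pinc k hk1
      have hge : j₀ ≤ j := by
        by_contra hcon
        push_neg at hcon
        have := chain j₀ j (by omega) hj₀n
        linarith
      have hne : j₀ ≠ j := by
        rintro rfl
        have e1 := hss' (k + 1) hk1
        have e2 := hss' k hk
        have e3 := hsa k hk1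
        have : s' k = s' (k + 1) := by rw [← hS, ← h3]
        rcases hsv k hk with e | e <;> rw [e1, e2, e3, e] at this <;> norm_num at this
      omega
  obtain ⟨j, hj1, hj2, -⟩ := main (n - 1) (by omega)
  omega

/-- If `θ` is simultaneously `(φ,ε)`-quasicritical of type `σ` and
`(φ,ε')`-quasicritical of type `σ'`, then `σ' ≠ −σ`. -/
theorem stmt19 (θ : ℝ → ℝ) (hθ : ContinuousOn θ (Set.Icc (0 : ℝ) 1)) (φ ε ε' : ℝ)
    (hε : ε ∈ Set.Ioo (0 : ℝ) (π / 4)) (hε' : ε' ∈ Set.Ioo (0 : ℝ) (π / 4))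
    (n n' : ℕ) (s s' : ℕ → ℝ) (hs : IsSignString n s) (hs' : IsSignString n' s')
    (hq : Quasicritical θ φ ε n s) (hq' : Quasicritical θ φ ε' n' s') :
    ¬(n' = n ∧ ∀ i < n, s' i = - s i) := by
  rintro ⟨rfl, hss'⟩
  have hn : 0 < n' := by have := hs.1; omega
  rcases le_total ε' ε with h | h
  · exact quasikey θ φ ε ε' hε.1 h n' hn s s' hs.2.1 hs.2.2 hss' hq hq'
  · refine quasikey θ φ ε' ε hε'.1 h n' hn s' s hs'.2.1 hs'.2.2 ?_ hq' hq
    intro i hi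
    rw [hss' i hi]
    ring
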